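/- A weak transition system X is injective with respect to the set of maps U = {C_1[x] ⊔_{∂} C_1[x] → C_1[x] : x ∈ Σ} (where the domain is two copies of the labelled 1-cube glued along their endpoints and the map identifies the two actions) if and only if X satisfies CSA1; moreover, since each map of U is an epimorphism, injectivity is equivalent to orthogonality (uniqueness of the lift). -/

import Mathlib

/-- A weak transition system over a set of labels `Λ`:
states, labelled actions, and nonempty lists of actions as transitions,
satisfying the multiset axiom and the patching axiom. -/
structure WTS (Λ : Type) where
  State : Type
  Act : Type
  lab : Act → Λ
  Tr : State → List Act → State → Prop
  tr_ne : ∀ {α l β}, Tr α l β → l ≠ []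
  multiset : ∀ {α β : State} {l l' : List Act}, Tr α l β → List.Perm l l' → Tr α l' β
  patching : ∀ {α β ν₁ ν₂ : State} {l₁ l₂ l₃ : List Act},
      l₁ ≠ [] → l₂ ≠ [] → l₃ ≠ [] →
      Tr α (l₁ ++ l₂ ++ l₃) β →
      Tr α l₁ ν₁ → Tr ν₁ (l₂ ++ l₃) β →
      Tr α (l₁ ++ l₂) ν₂ → Tr ν₂ l₃ β →
      Tr ν₁ l₂ ν₂

/-- A morphism of weak transition systems. -/
structure WTSHom {Λ : Type} (X Y : WTS Λ) where
  onState : X.State → Y.State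
  onAct : X.Act → Y.Act
  lab_eq : ∀ a, Y.lab (onAct a) = X.lab a
  map_tr : ∀ {α l β}, X.Tr α l β → Y.Tr (onState α) (l.map onAct) (onState β)

def WTSHom.comp {Λ : Type} {X Y Z : WTS Λ} (g : WTSHom Y Z) (f : WTSHom X Y) :
    WTSHom X Z where
  onState := g.onState ∘ f.onState
  onAct := g.onAct ∘ f.onAct
  lab_eq := fun a => by simp [g.lab_eq, f.lab_eq]
  map_tr := fun h => by
    have := g.map_tr (f.map_tr h)
    simpa [List.map_map, Function.comp] using this

def WTSHom.id' {Λ : Type} (X : WTS Λ) : WTSHom X X where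
  onState := id
  onAct := id
  lab_eq := fun _ => rfl
  map_tr := fun h => by simpa using h

/-- Every action is used by a 1-transition. -/
def AllUsed {Λ : Type} (X : WTS Λ) : Prop := ∀ a, ∃ α β, X.Tr α [a] β

/-- Intermediate state axiom. -/
def InterState {Λ : Type} (X : WTS Λ) : Prop :=
  ∀ {α β : X.State} (l₁ l₂ : List X.Act), l₁ ≠ [] → l₂ ≠ [] →
    X.Tr α (l₁ ++ l₂) β → ∃ ν, X.Tr α l₁ ν ∧ X.Tr ν l₂ β

def IsCubical {Λ : Type} (X : WTS Λ) : Prop := AllUsed X ∧ InterState X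

/-- CSA1. -/
def CSA1 {Λ : Type} (X : WTS Λ) : Prop :=
  ∀ {α β : X.State} (u v : X.Act),
    X.Tr α [u] β → X.Tr α [v] β → X.lab u = X.lab v → u = v

/-- CSA2 : unique intermediate state axiom. -/
def CSA2 {Λ : Type} (X : WTS Λ) : Prop :=
  ∀ {α β : X.State} (l₁ l₂ : List X.Act), l₁ ≠ [] → l₂ ≠ [] →
    X.Tr α (l₁ ++ l₂) β → ∃! ν, X.Tr α l₁ ν ∧ X.Tr ν l₂ β

def IsRegularTS {Λ : Type} (X : WTS Λ) : Prop := IsCubical X ∧ CSA2 X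

/-- Cattani-Sassone transition system. -/
def IsCSTS {Λ : Type} (X : WTS Λ) : Prop := IsCubical X ∧ CSA1 X ∧ CSA2 X

/-- Internal state. -/
def Internal {Λ : Type} (X : WTS Λ) (α : X.State) : Prop :=
  ∃ (γ δ : X.State) (l₁ l₂ : List X.Act),
    l₁ ≠ [] ∧ l₂ ≠ [] ∧ X.Tr γ (l₁ ++ l₂) δ ∧ X.Tr γ l₁ α ∧ X.Tr α l₂ δ

/-- Reachability via a finite sequence of 1-transitions. -/
def Reachable {Λ : Type} (X : WTS Λ) (base α : X.State) : Prop :=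
  ∃ (n : ℕ) (s : Fin (n + 1) → X.State) (u : Fin n → X.Act),
    s 0 = base ∧ s (Fin.last n) = α ∧
    ∀ i : Fin n, X.Tr (s i.castSucc) [u i] (s i.succ)

/-- Star-shaped pointed transition system. -/
def StarShaped {Λ : Type} (X : WTS Λ) (base : X.State) : Prop :=
  ∀ α, Reachable X base α

/-- The labelled 1-cube `C₁[x]`: two states, one action labelled `x`, one transition. -/
def C1 {Λ : Type} (x : Λ) : WTS Λ where
  State := Bool
  Act := Unit
  lab := fun _ => x
  Tr := fun α l β => α = false ∧ β = true ∧ l = [()]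
  tr_ne := by rintro α l β ⟨-, -, rfl⟩; simp
  multiset := by
    rintro α β l l' ⟨h1, h2, rfl⟩ hp
    exact ⟨h1, h2, (List.perm_singleton.mp hp.symm).symm ▸ rfl⟩
  patching := by
    rintro α β ν₁ ν₂ l₁ l₂ l₃ h1 h2 h3 ⟨-, -, h⟩ - - - -
    exfalso
    have e1 := List.length_pos_of_ne_nil h1
    have e2 := List.length_pos_of_ne_nil h2
    have e3 := List.length_pos_of_ne_nil h3
    have := congrArg List.length h
    simp [List.length_append] at this
    omega

/-- Two copies of `C₁[x]` glued along their endpoints: two states, two actions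
labelled `x`, two transitions. -/
def DblC1 {Λ : Type} (x : Λ) : WTS Λ where
  State := Bool
  Act := Bool
  lab := fun _ => x
  Tr := fun α l β => α = false ∧ β = true ∧ ∃ b : Bool, l = [b]
  tr_ne := by rintro α l β ⟨-, -, b, rfl⟩; simp
  multiset := by
    rintro α β l l' ⟨h1, h2, b, rfl⟩ hp
    exact ⟨h1, h2, b, List.perm_singleton.mp hp.symm⟩
  patching := by
    rintro α β ν₁ ν₂ l₁ l₂ l₃ h1 h2 h3 ⟨-, -, b, h⟩ - - - -
    exfalso
    have e1 := List.length_pos_of_ne_nil h1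
    have e2 := List.length_pos_of_ne_nil h2
    have e3 := List.length_pos_of_ne_nil h3
    have := congrArg List.length h
    simp [List.length_append] at this
    omega

/-- The map `C₁[x] ⊔_∂ C₁[x] → C₁[x]` of the set `U`: the identity on states,
identifying the two actions. -/
def collapse {Λ : Type} (x : Λ) : WTSHom (DblC1 x) (C1 x) where
  onState := id
  onAct := fun _ => ()
  lab_eq := fun _ => rfl
  map_tr := by rintro α l β ⟨h1, h2, b, rfl⟩; exact ⟨h1, h2, rfl⟩

lemma WTSHom.ext' {Λ : Type} {X Y : WTS Λ} {f g : WTSHom X Y}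
    (h1 : f.onState = g.onState) (h2 : f.onAct = g.onAct) : f = g := by
  cases f; cases g; simp_all

lemma inj_of_csa1 {Λ : Type} (X : WTS Λ) (hc : CSA1 X) :
    ∀ (x : Λ) (g : WTSHom (DblC1 x) X),
      ∃ h : WTSHom (C1 x) X, h.comp (collapse x) = g := by
  intro x g
  have t1 : X.Tr (g.onState false) [g.onAct false] (g.onState true) := by
    exact g.map_tr (α := false) (β := true) (l := [false]) ⟨rfl, rfl, false, rfl⟩
  have t2 : X.Tr (g.onState false) [g.onAct true] (g.onState true) := by
    exact g.map_tr (α := false) (β := true) (l := [true]) ⟨rfl, rfl, true, rfl⟩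
  have hlab : X.lab (g.onAct false) = X.lab (g.onAct true) := by
    exact (g.lab_eq false).trans (g.lab_eq true).symm
  have huv : g.onAct false = g.onAct true := hc _ _ t1 t2 hlab
  refine ⟨{ onState := g.onState, onAct := fun _ => g.onAct false,
            lab_eq := fun _ => g.lab_eq false,
            map_tr := ?_ }, ?_⟩
  · rintro α l β ⟨rfl, rfl, rfl⟩
    exact t1
  · refine WTSHom.ext' rfl ?_
    funext b
    cases b
    · rfl
    · exact huv

/-- a weak transition system `X` is injective with respect to the maps
of `U` iff it satisfies CSA1; moreover injectivity with respect to `U` is equivalent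
to orthogonality (unique lifts) with respect to `U`. -/
theorem stmt_8 {Λ : Type} [Infinite Λ] (X : WTS Λ) :
    ((∀ (x : Λ) (g : WTSHom (DblC1 x) X),
        ∃ h : WTSHom (C1 x) X, h.comp (collapse x) = g) ↔ CSA1 X) ∧
    ((∀ (x : Λ) (g : WTSHom (DblC1 x) X),
        ∃ h : WTSHom (C1 x) X, h.comp (collapse x) = g) ↔
     (∀ (x : Λ) (g : WTSHom (DblC1 x) X),
        ∃! h : WTSHom (C1 x) X, h.comp (collapse x) = g)) := by
  have uniq : ∀ (x : Λ) (g : WTSHom (DblC1 x) X) (h₁ h₂ : WTSHom (C1 x) X),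
      h₁.comp (collapse x) = g → h₂.comp (collapse x) = g → h₁ = h₂ := by
    intro x g h₁ h₂ e₁ e₂
    refine WTSHom.ext' ?_ ?_
    · have := congrArg WTSHom.onState (e₁.trans e₂.symm)
      exact this
    · have := congrArg (fun f => WTSHom.onAct f false) (e₁.trans e₂.symm)
      funext u; cases u
      exact this
  constructor
  · constructor
    · intro hinj α β u v hu hv hlab
      obtain ⟨h, hh⟩ := hinj (X.lab u)
        { onState := fun b => cond b β α
          onAct := fun b => cond b v u
          lab_eq := by rintro (_|_) <;> simp [DblC1, hlab]
          map_tr := by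
            rintro a l b ⟨rfl, rfl, (_|_), rfl⟩ <;> simpa using (by assumption) }
      have e0 := congrArg (fun f => WTSHom.onAct f false) hh
      have e1 := congrArg (fun f => WTSHom.onAct f true) hh
      simp only [WTSHom.comp, collapse, Function.comp, cond] at e0 e1
      exact e0.symm.trans e1
    · exact inj_of_csa1 X
  · constructor
    · intro hinj x g
      obtain ⟨h, hh⟩ := hinj x g
      exact ⟨h, hh, fun h' hh' => uniq x g h' h hh' hh⟩
    · intro horth x g
      obtain ⟨h, hh, -⟩ := horth x g
      exact ⟨h, hh⟩
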